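/- arXiv:2205.04246 — 5 statements merged into one kernel-verified Lean document; each statement's English description precedes it below -/
import Mathlib

section
/- Let I and J be open intervals in ℝ, and let f : I → ℝ and g : J → ℝ be twice continuously differentiable functions such that f'(x)·g'(y) > 0 and f(x) + g(y) ≠ 0 for all (x,y) ∈ I × J. Then the function u(x,y) = ln( 2 f'(x) g'(y) / (f(x) + g(y))² ) satisfies Liouville's hyperbolic equation ∂²u/∂x∂y = e^{u} at every point of I × J. -/
/-!
Along each horizontal line the `y`-derivative of `u` is
`g''(y)/g'(y) - 2 g'(y)/(f(x) + g(y))`, in which `x` enters only through `f(x)`;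
differentiating this in `x` gives `2 f'(x) g'(y)/(f(x) + g(y))²`, which is exactly `e^u`.
-/

open Real

theorem hasDerivAt_log_mul_div_add_sq {φ ψ : ℝ → ℝ} {φ' ψ' a c y : ℝ}
    (hφ : HasDerivAt φ φ' y) (hψ : HasDerivAt ψ ψ' y) (ha : a ≠ 0) (hφy : φ y ≠ 0)
    (hc : c + ψ y ≠ 0) :
    HasDerivAt (fun t => log (a * φ t / (c + ψ t) ^ 2))
      (φ' / φ y - 2 * ψ' / (c + ψ y)) y := by
  have hquot := (hφ.const_mul a).fun_div ((hψ.const_add c).fun_pow 2) (pow_ne_zero 2 hc)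
  refine (hquot.log (div_ne_zero (mul_ne_zero ha hφy) (pow_ne_zero 2 hc))).congr_deriv ?_
  field_simp
  ring

theorem hasDerivAt_const_sub_div_add {f : ℝ → ℝ} {f' b k c x : ℝ}
    (hf : HasDerivAt f f' x) (hc : f x + c ≠ 0) :
    HasDerivAt (fun t => b - k / (f t + c)) (k * f' / (f x + c) ^ 2) x := by
  have hdiv := (hasDerivAt_const x k).fun_div (hf.add_const c) hc
  exact (hdiv.const_sub b).congr_deriv (by ring)

theorem liouville_hyperbolic_solution_general
    (I J : Set ℝ) (hI : IsOpen I) (hJ : IsOpen J)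
    (f g : ℝ → ℝ)
    (hf : ContDiffOn ℝ 2 f I) (hg : ContDiffOn ℝ 2 g J)
    (hpos : ∀ x ∈ I, ∀ y ∈ J, 0 < deriv f x * deriv g y)
    (hne : ∀ x ∈ I, ∀ y ∈ J, f x + g y ≠ 0)
    (u : ℝ → ℝ → ℝ)
    (hu : ∀ x y, u x y =
      Real.log (2 * deriv f x * deriv g y / (f x + g y) ^ 2)) :
    ∀ x ∈ I, ∀ y ∈ J,
      deriv (fun x' => deriv (fun y' => u x' y') y) x = Real.exp (u x y) := by
  intro x hx y hy
  have hfx : HasDerivAt f (deriv f x) x :=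
    ((hf.contDiffAt (hI.mem_nhds hx)).differentiableAt two_ne_zero).hasDerivAt
  have hgy : HasDerivAt g (deriv g y) y :=
    ((hg.contDiffAt (hJ.mem_nhds hy)).differentiableAt two_ne_zero).hasDerivAt
  have hg'y : HasDerivAt (deriv g) (deriv (deriv g) y) y :=
    (((hg.deriv_of_isOpen hJ le_rfl).contDiffAt (hJ.mem_nhds hy)).differentiableAt
      one_ne_zero).hasDerivAt
  have hg'ne : deriv g y ≠ 0 := right_ne_zero_of_mul (hpos x hx y hy).ne'
  have inner : ∀ x' ∈ I, deriv (fun y' => u x' y') y =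
      deriv (deriv g) y / deriv g y - 2 * deriv g y / (f x' + g y) := fun x' hx' => by
    simp only [hu]
    have hf'ne : 2 * deriv f x' ≠ 0 :=
      mul_ne_zero two_ne_zero (left_ne_zero_of_mul (hpos x' hx' y hy).ne')
    exact (hasDerivAt_log_mul_div_add_sq hg'y hgy hf'ne hg'ne (hne x' hx' y hy)).deriv
  have outer := hasDerivAt_const_sub_div_add (b := deriv (deriv g) y / deriv g y)
    (k := 2 * deriv g y) hfx (hne x hx y hy)
  have hexp_pos : 0 < 2 * deriv f x * deriv g y / (f x + g y) ^ 2 := by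
    have := hpos x hx y hy
    exact div_pos (by linarith [mul_assoc 2 (deriv f x) (deriv g y)])
      (sq_pos_of_ne_zero (hne x hx y hy))
  rw [(Filter.eventuallyEq_of_mem (hI.mem_nhds hx) inner).deriv_eq, outer.deriv, hu,
    exp_log hexp_pos]
  ring

/-- Liouville's formula `u(x,y) = ln(2 f'(x) g'(y) / (f(x)+g(y))²)` solves the
hyperbolic Liouville equation `u_{xy} = e^u` on a product of open intervals. -/
theorem liouville_hyperbolic_solution
    (I J : Set ℝ) (hI : IsOpen I) (hJ : IsOpen J)
    (hIint : I.OrdConnected) (hJint : J.OrdConnected)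
    (f g : ℝ → ℝ)
    (hf : ContDiffOn ℝ 2 f I) (hg : ContDiffOn ℝ 2 g J)
    (hpos : ∀ x ∈ I, ∀ y ∈ J, 0 < deriv f x * deriv g y)
    (hne : ∀ x ∈ I, ∀ y ∈ J, f x + g y ≠ 0)
    (u : ℝ → ℝ → ℝ)
    (hu : ∀ x y, u x y =
      Real.log (2 * deriv f x * deriv g y / (f x + g y) ^ 2)) :
    ∀ x ∈ I, ∀ y ∈ J,
      deriv (fun x' => deriv (fun y' => u x' y') y) x = Real.exp (u x y) :=
  liouville_hyperbolic_solution_general I J hI hJ f g hf hg hpos hne u hu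
end

section
/- Let K and a be nonzero real constants, let I and J be open intervals in ℝ, and let f : I → ℝ and g : J → ℝ be twice continuously differentiable functions such that 2 f'(x) g'(y) / (a K) > 0 and f(x) + g(y) ≠ 0 for all (x,y) ∈ I × J. Then the function u(x,y) = (1/a) · ln( 2 f'(x) g'(y) / ( a K (f(x) + g(y))² ) ) satisfies the equation ∂²u/∂x∂y = K e^{a u} at every point of I × J. -/
/-! Differentiating `u` in `y` kills the `f'(x)` factor inside the logarithm and leaves
`u_y = (1/a) (g''/g' - 2 g'/(f + g))`, whose `x`-derivative is `(2/a) f' g' / (f + g)²`.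
On the other side `K e^{au}` is `K` times the argument of the logarithm, which is again
`2 f' g' / (a (f + g)²)`. -/

open Real Filter Topology

noncomputable def liouvilleSolution (K a : ℝ) (f g : ℝ → ℝ) (x y : ℝ) : ℝ :=
  (1 / a) * log (2 * deriv f x * deriv g y / (a * K * (f x + g y) ^ 2))

theorem HasDerivAt.log_div_const_mul_sq {p s : ℝ → ℝ} {p' s' b y : ℝ}
    (hp : HasDerivAt p p' y) (hs : HasDerivAt s s' y) (hpy : p y ≠ 0) (hsy : s y ≠ 0)
    (hb : b ≠ 0) :
    HasDerivAt (fun t => Real.log (p t / (b * s t ^ 2))) (p' / p y - 2 * s' / s y) y := by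
  have hden : b * s y ^ 2 ≠ 0 := mul_ne_zero hb (pow_ne_zero 2 hsy)
  refine ((hp.div ((hs.pow 2).const_mul b) hden).log (div_ne_zero hpy hden)).congr_deriv ?_
  simp only [Pi.div_apply, Pi.pow_apply]
  field_simp
  ring

theorem HasDerivAt.const_sub_div {s : ℝ → ℝ} {s' c d x : ℝ} (hs : HasDerivAt s s' x)
    (hsx : s x ≠ 0) : HasDerivAt (fun t => c - d / s t) (d * s' / s x ^ 2) x := by
  have hsub := (hasDerivAt_const x c).sub ((hs.inv hsx).const_mul d)
  refine (hsub.congr_deriv (by ring)).congr_of_eventuallyEq (.of_forall fun t => ?_)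
  simp [div_eq_mul_inv]

theorem ContDiffOn.hasDerivAt_deriv {f : ℝ → ℝ} {s : Set ℝ} {x : ℝ}
    (hf : ContDiffOn ℝ 2 f s) (hs : IsOpen s) (hx : x ∈ s) :
    HasDerivAt (deriv f) (deriv (deriv f) x) x :=
  (((hf.deriv_of_isOpen hs (by norm_num : (1 : WithTop ℕ∞) + 1 ≤ 2)).differentiableOn
    one_ne_zero).differentiableAt (hs.mem_nhds hx)).hasDerivAt

section

variable {K a : ℝ} {f g : ℝ → ℝ}

theorem hasDerivAt_liouvilleSolution_right {x y : ℝ} (haK : a * K ≠ 0) (hfx : deriv f x ≠ 0)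
    (hgy : deriv g y ≠ 0) (hs : f x + g y ≠ 0) (hg : DifferentiableAt ℝ g y)
    (hg' : HasDerivAt (deriv g) (deriv (deriv g) y) y) :
    HasDerivAt (liouvilleSolution K a f g x)
      ((1 / a) * (deriv (deriv g) y / deriv g y - 2 * deriv g y / (f x + g y))) y := by
  have hlog := HasDerivAt.log_div_const_mul_sq (hg'.const_mul (2 * deriv f x))
    (hg.hasDerivAt.const_add (f x)) (by simp [hfx, hgy]) hs haK
  refine (hlog.const_mul (1 / a)).congr_deriv ?_
  field_simp

theorem hasDerivAt_deriv_liouvilleSolution_right {x y : ℝ} (haK : a * K ≠ 0)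
    (hnear : ∀ᶠ x' in 𝓝 x, deriv f x' ≠ 0 ∧ f x' + g y ≠ 0)
    (hf : HasDerivAt f (deriv f x) x)
    (hgy : deriv g y ≠ 0) (hg : DifferentiableAt ℝ g y)
    (hg' : HasDerivAt (deriv g) (deriv (deriv g) y) y) :
    HasDerivAt (fun x' => deriv (liouvilleSolution K a f g x') y)
      (2 / a * deriv f x * deriv g y / (f x + g y) ^ 2) x := by
  have hsx : f x + g y ≠ 0 := hnear.self_of_nhds.2
  have hderiv := (HasDerivAt.const_sub_div (c := deriv (deriv g) y / deriv g y)
    (d := 2 * deriv g y) (hf.add_const (g y)) hsx).const_mul (1 / a)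
  refine (hderiv.congr_deriv (by ring)).congr_of_eventuallyEq ?_
  filter_upwards [hnear] with x' ⟨hfx', hs'⟩
  exact (hasDerivAt_liouvilleSolution_right haK hfx' hgy hs' hg hg').deriv

theorem const_mul_exp_mul_liouvilleSolution {x y : ℝ} (hK : K ≠ 0) (ha : a ≠ 0)
    (hpos : 0 < 2 * deriv f x * deriv g y / (a * K)) (hs : f x + g y ≠ 0) :
    K * exp (a * liouvilleSolution K a f g x y) =
      2 / a * deriv f x * deriv g y / (f x + g y) ^ 2 := by
  have harg : 0 < 2 * deriv f x * deriv g y / (a * K * (f x + g y) ^ 2) := by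
    rw [← div_div]
    positivity
  rw [liouvilleSolution, ← mul_assoc, mul_one_div_cancel ha, one_mul, exp_log harg]
  field_simp

end

theorem liouville_hyperbolic_solution_param_general
    (K a : ℝ) (hK : K ≠ 0) (ha : a ≠ 0)
    (I J : Set ℝ) (hI : IsOpen I) (hJ : IsOpen J)
    (f g : ℝ → ℝ)
    (hf : ContDiffOn ℝ 2 f I) (hg : ContDiffOn ℝ 2 g J)
    (hpos : ∀ x ∈ I, ∀ y ∈ J, 0 < 2 * deriv f x * deriv g y / (a * K))
    (hne : ∀ x ∈ I, ∀ y ∈ J, f x + g y ≠ 0)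
    (u : ℝ → ℝ → ℝ)
    (hu : ∀ x y, u x y =
      (1 / a) * Real.log (2 * deriv f x * deriv g y / (a * K * (f x + g y) ^ 2))) :
    ∀ x ∈ I, ∀ y ∈ J,
      deriv (fun x' => deriv (fun y' => u x' y') y) x = K * Real.exp (a * u x y) := by
  obtain rfl : u = liouvilleSolution K a f g := funext₂ hu
  intro x hx y hy
  have hderivs_ne : ∀ x' ∈ I, deriv f x' ≠ 0 ∧ deriv g y ≠ 0 := fun x' hx' => by
    simpa using (div_ne_zero_iff.mp (hpos x' hx' y hy).ne').1
  have hnear : ∀ᶠ x' in 𝓝 x, deriv f x' ≠ 0 ∧ f x' + g y ≠ 0 := by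
    filter_upwards [hI.mem_nhds hx] with x' hx' using ⟨(hderivs_ne x' hx').1, hne x' hx' y hy⟩
  have hgy : DifferentiableAt ℝ g y :=
    (hg.contDiffAt (hJ.mem_nhds hy)).differentiableAt two_ne_zero
  have hfx : HasDerivAt f (deriv f x) x :=
    ((hf.contDiffAt (hI.mem_nhds hx)).differentiableAt two_ne_zero).hasDerivAt
  rw [const_mul_exp_mul_liouvilleSolution hK ha (hpos x hx y hy) (hne x hx y hy)]
  exact (hasDerivAt_deriv_liouvilleSolution_right (mul_ne_zero ha hK) hnear hfx
    (hderivs_ne x hx).2 hgy (hg.hasDerivAt_deriv hJ hy)).deriv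

/-- Liouville's formula for the hyperbolic equation with parameters:
`u(x,y) = (1/a) ln( 2 f'(x) g'(y) / (aK (f(x)+g(y))²) )` solves `u_{xy} = K e^{au}`. -/
theorem liouville_hyperbolic_solution_param
    (K a : ℝ) (hK : K ≠ 0) (ha : a ≠ 0)
    (I J : Set ℝ) (hI : IsOpen I) (hJ : IsOpen J)
    (hIint : I.OrdConnected) (hJint : J.OrdConnected)
    (f g : ℝ → ℝ)
    (hf : ContDiffOn ℝ 2 f I) (hg : ContDiffOn ℝ 2 g J)
    (hpos : ∀ x ∈ I, ∀ y ∈ J, 0 < 2 * deriv f x * deriv g y / (a * K))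
    (hne : ∀ x ∈ I, ∀ y ∈ J, f x + g y ≠ 0)
    (u : ℝ → ℝ → ℝ)
    (hu : ∀ x y, u x y =
      (1 / a) * Real.log (2 * deriv f x * deriv g y / (a * K * (f x + g y) ^ 2))) :
    ∀ x ∈ I, ∀ y ∈ J,
      deriv (fun x' => deriv (fun y' => u x' y') y) x = K * Real.exp (a * u x y) :=
  liouville_hyperbolic_solution_param_general K a hK ha I J hI hJ f g hf hg hpos hne u hu
end

section
/- Let Ω ⊆ ℂ be open and let F : Ω → ℂ be holomorphic with F'(z) ≠ 0 for all z ∈ Ω. Then the function u(z) = ln( 4 |F'(z)|² / (1 + |F(z)|²)² ) satisfies the elliptic Liouville equation Δu = −2 e^{u} on Ω, where Δ is the Laplacian on ℝ² identified with ℂ. -/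
/-!
Near a point of `Ω`, `u = log 4 + 2 (log ‖F'‖ - log (1 + ‖F‖²))`. The term `log ‖F'‖` is harmonic
because `F'` is holomorphic without zeros. For a holomorphic `f` and a profile `φ`, the chain rule
gives `Δ (φ ∘ ‖f‖²) = 4 ‖f'‖² (φ' + s φ'')` at `s = ‖f‖²`: the second directional derivatives
along `1` and `I` pick up `f''` and `I² f''`, which cancel. For `φ = log (1 + ·)` this is
`4 ‖F'‖² / (1 + ‖F‖²)² = e^u`, so `Δu = -2 e^u`.
-/

open Complex Filter Topology InnerProductSpace Laplacian

theorem fderiv_fderiv_apply_eq_iteratedFDeriv_two {E F : Type*} [NormedAddCommGroup E]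
    [NormedSpace ℝ E] [NormedAddCommGroup F] [NormedSpace ℝ F] {u : E → F} {z : E}
    (h : DifferentiableAt ℝ (fderiv ℝ u) z) (v : E) :
    fderiv ℝ (fun w => fderiv ℝ u w v) z v = iteratedFDeriv ℝ 2 u z ![v, v] := by
  rw [iteratedFDeriv_two_apply, fderiv_clm_apply h (differentiableAt_const v)]
  simp

theorem laplacian_eq_fderiv_fderiv_complexPlane {F : Type*} [NormedAddCommGroup F]
    [NormedSpace ℝ F] {u : ℂ → F} {z : ℂ} (h : ContDiffAt ℝ 2 u z) :
    Δ u z = fderiv ℝ (fun w => fderiv ℝ u w 1) z 1 + fderiv ℝ (fun w => fderiv ℝ u w I) z I := by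
  have hd : DifferentiableAt ℝ (fderiv ℝ u) z :=
    (h.fderiv_right (m := 1) (by norm_num)).differentiableAt (by norm_num)
  rw [laplacian_eq_iteratedFDeriv_complexPlane, fderiv_fderiv_apply_eq_iteratedFDeriv_two hd,
    fderiv_fderiv_apply_eq_iteratedFDeriv_two hd]

section NormSq

variable {E F : Type*} [NormedAddCommGroup E] [NormedSpace ℝ E]
  [NormedAddCommGroup F] [InnerProductSpace ℝ F] {φ : ℝ → ℝ} {f : E → F}

theorem fderiv_comp_norm_sq_apply {w : E} (hf : DifferentiableAt ℝ f w)
    (hφ : DifferentiableAt ℝ φ (‖f w‖ ^ 2)) (v : E) :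
    fderiv ℝ (fun x => φ (‖f x‖ ^ 2)) w v
      = deriv φ (‖f w‖ ^ 2) * (2 * ⟪f w, fderiv ℝ f w v⟫_ℝ) := by
  have h : HasFDerivAt (fun x => φ (‖f x‖ ^ 2)) _ w :=
    hφ.hasDerivAt.comp_hasFDerivAt w hf.hasFDerivAt.norm_sq
  rw [h.fderiv]
  simp

theorem fderiv_fderiv_comp_norm_sq_apply {z : E} (hf : ContDiffAt ℝ 2 f z)
    (hφ : ContDiffAt ℝ 2 φ (‖f z‖ ^ 2)) (v : E) :
    fderiv ℝ (fun w => fderiv ℝ (fun x => φ (‖f x‖ ^ 2)) w v) z v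
      = deriv (deriv φ) (‖f z‖ ^ 2) * (2 * ⟪f z, fderiv ℝ f z v⟫_ℝ) ^ 2
        + deriv φ (‖f z‖ ^ 2) * (2 * (‖fderiv ℝ f z v‖ ^ 2
          + ⟪f z, fderiv ℝ (fun w => fderiv ℝ f w v) z v⟫_ℝ)) := by
  have hφ_near : ∀ᶠ w in 𝓝 z, DifferentiableAt ℝ φ (‖f w‖ ^ 2) :=
    (hf.continuousAt.norm.pow 2).eventually
      ((hφ.eventually (by simp)).mono fun t ht => ht.differentiableAt (by simp))
  have hf_near : ∀ᶠ w in 𝓝 z, DifferentiableAt ℝ f w :=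
    (hf.eventually (by simp)).mono fun w hw => hw.differentiableAt (by simp)
  have hfirst : (fun w => fderiv ℝ (fun x => φ (‖f x‖ ^ 2)) w v) =ᶠ[𝓝 z]
      fun w => deriv φ (‖f w‖ ^ 2) * (2 * ⟪f w, fderiv ℝ f w v⟫_ℝ) := by
    filter_upwards [hφ_near, hf_near] with w hφw hfw using fderiv_comp_norm_sq_apply hfw hφw v
  have hdφ : DifferentiableAt ℝ (deriv φ) (‖f z‖ ^ 2) :=
    (hφ.derivWithin (m := 1) (by norm_num)).differentiableAt (by norm_num)
  have hdf : DifferentiableAt ℝ (fun w => fderiv ℝ f w v) z :=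
    ((hf.fderiv_right (m := 1) (by norm_num)).differentiableAt (by norm_num)).clm_apply
      (differentiableAt_const v)
  have hfz := hf.differentiableAt (by norm_num)
  have hdφf : HasFDerivAt (fun w => deriv φ (‖f w‖ ^ 2)) _ z :=
    HasDerivAt.comp_hasFDerivAt (h₂ := deriv φ) z hdφ.hasDerivAt hfz.hasFDerivAt.norm_sq
  have h := hdφf.fun_mul ((hfz.hasFDerivAt.inner ℝ hdf.hasFDerivAt).const_mul 2)
  rw [hfirst.fderiv_eq, h.fderiv]
  simp only [add_apply, smul_apply,
    ContinuousLinearMap.comp_apply, ContinuousLinearMap.prod_apply, fderivInnerCLM_apply,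
    inner_self_eq_norm_sq_to_K, Real.ringHom_apply, smul_eq_mul, coe_innerSL_apply, nsmul_eq_mul,
    Nat.cast_ofNat]
  ring

end NormSq

theorem DifferentiableAt.fderiv_real_apply {f : ℂ → ℂ} {w : ℂ} (hf : DifferentiableAt ℂ f w)
    (v : ℂ) : fderiv ℝ f w v = v * deriv f w := by
  rw [hf.fderiv_restrictScalars ℝ]
  simp

theorem AnalyticAt.fderiv_fderiv_real_apply {f : ℂ → ℂ} {z : ℂ} (hf : AnalyticAt ℂ f z) (v : ℂ) :
    fderiv ℝ (fun w => fderiv ℝ f w v) z v = v * (v * deriv (deriv f) z) := by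
  have hfirst : (fun w => fderiv ℝ f w v) =ᶠ[𝓝 z] fun w => v * deriv f w :=
    hf.eventually_analyticAt.mono fun w hw => hw.differentiableAt.fderiv_real_apply v
  have hdf : DifferentiableAt ℂ (deriv f) z := hf.deriv.differentiableAt
  rw [hfirst.fderiv_eq, (hdf.const_mul v).fderiv_real_apply, deriv_const_mul v hdf]

theorem Complex.inner_sq_add_inner_I_mul_sq (a b : ℂ) :
    ⟪a, b⟫_ℝ ^ 2 + ⟪a, I * b⟫_ℝ ^ 2 = ‖a‖ ^ 2 * ‖b‖ ^ 2 := by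
  simp only [Complex.inner, ← normSq_eq_norm_sq, normSq_apply, mul_re, mul_im, conj_re, conj_im,
    I_re, I_im]
  ring

theorem AnalyticAt.contDiffAt_comp_norm_sq {φ : ℝ → ℝ} {f : ℂ → ℂ} {z : ℂ}
    (hf : AnalyticAt ℂ f z) (hφ : ContDiffAt ℝ 2 φ (‖f z‖ ^ 2)) :
    ContDiffAt ℝ 2 (fun w => φ (‖f w‖ ^ 2)) z :=
  hφ.comp z ((contDiff_norm_sq ℝ).contDiffAt.comp z (hf.contDiffAt.restrict_scalars ℝ))

theorem AnalyticAt.laplacian_comp_norm_sq {φ : ℝ → ℝ} {f : ℂ → ℂ} {z : ℂ}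
    (hf : AnalyticAt ℂ f z) (hφ : ContDiffAt ℝ 2 φ (‖f z‖ ^ 2)) :
    Δ (fun w => φ (‖f w‖ ^ 2)) z = 4 * ‖deriv f z‖ ^ 2
      * (deriv φ (‖f z‖ ^ 2) + ‖f z‖ ^ 2 * deriv (deriv φ) (‖f z‖ ^ 2)) := by
  have hfR : ContDiffAt ℝ 2 f z := hf.contDiffAt.restrict_scalars ℝ
  rw [laplacian_eq_fderiv_fderiv_complexPlane (hf.contDiffAt_comp_norm_sq hφ),
    fderiv_fderiv_comp_norm_sq_apply hfR hφ, fderiv_fderiv_comp_norm_sq_apply hfR hφ,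
    hf.fderiv_fderiv_real_apply, hf.fderiv_fderiv_real_apply,
    hf.differentiableAt.fderiv_real_apply, hf.differentiableAt.fderiv_real_apply,
    ← mul_assoc I, I_mul_I, neg_one_mul, inner_neg_right]
  have hsum := Complex.inner_sq_add_inner_I_mul_sq (f z) (deriv f z)
  simp only [one_mul, norm_mul, norm_I] at hsum ⊢
  linear_combination (4 * deriv (deriv φ) (‖f z‖ ^ 2)) * hsum

theorem contDiffAt_log_one_add {n : WithTop ℕ∞} {s : ℝ} (hs : 1 + s ≠ 0) :
    ContDiffAt ℝ n (fun t => Real.log (1 + t)) s := by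
  fun_prop (disch := assumption)

theorem AnalyticAt.laplacian_log_one_add_norm_sq {f : ℂ → ℂ} {z : ℂ} (hf : AnalyticAt ℂ f z) :
    Δ (fun w => Real.log (1 + ‖f w‖ ^ 2)) z = 4 * ‖deriv f z‖ ^ 2 / (1 + ‖f z‖ ^ 2) ^ 2 := by
  have hφ : ContDiffAt ℝ 2 (fun t => Real.log (1 + t)) (‖f z‖ ^ 2) :=
    contDiffAt_log_one_add (by positivity)
  have hdφ : deriv (fun t => Real.log (1 + t)) = fun t => (1 + t)⁻¹ := by
    funext t; simp only [deriv_comp_const_add, Real.deriv_log]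
  have hd2φ : deriv (fun t : ℝ => (1 + t)⁻¹) = fun t => -((1 + t) ^ 2)⁻¹ := by
    funext t; simp only [deriv_comp_const_add, deriv_inv]
  rw [hf.laplacian_comp_norm_sq hφ, hdφ, hd2φ]
  field_simp
  ring

theorem Real.log_mul_sq_div_sq {c a b : ℝ} (hc : c ≠ 0) (ha : a ≠ 0) (hb : b ≠ 0) :
    Real.log (c * a ^ 2 / b ^ 2) = Real.log c + 2 * (Real.log a - Real.log b) := by
  rw [Real.log_div (by positivity) (by positivity), Real.log_mul hc (by positivity),
    Real.log_pow, Real.log_pow]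
  push_cast
  ring

/-- Liouville's formula in the elliptic setting: if `F` is holomorphic with
nonvanishing derivative on an open set `Ω ⊆ ℂ`, then
`u = ln( 4|F'|² / (1+|F|²)² )` satisfies `Δu = -2 e^u` on `Ω`,
where the Laplacian is the sum of the second directional derivatives in the
directions `1` and `I` of `ℂ ≅ ℝ²`. -/
theorem liouville_elliptic_solution_neg
    (Ω : Set ℂ) (hΩ : IsOpen Ω)
    (F : ℂ → ℂ) (hF : DifferentiableOn ℂ F Ω)
    (hF' : ∀ z ∈ Ω, deriv F z ≠ 0)
    (u : ℂ → ℝ)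
    (hu : ∀ z, u z =
      Real.log (4 * ‖deriv F z‖ ^ 2 / (1 + ‖F z‖ ^ 2) ^ 2)) :
    ∀ z ∈ Ω,
      fderiv ℝ (fun w => fderiv ℝ u w 1) z 1
        + fderiv ℝ (fun w => fderiv ℝ u w Complex.I) z Complex.I
      = -2 * Real.exp (u z) := by
  intro z hz
  have hFz : AnalyticAt ℂ F z := hF.analyticAt (hΩ.mem_nhds hz)
  set g : ℂ → ℝ := (fun w => Real.log ‖deriv F w‖) - fun w => Real.log (1 + ‖F w‖ ^ 2)
  have hu_eq : u =ᶠ[𝓝 z] (fun _ => Real.log 4) + (2 : ℝ) • g := by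
    filter_upwards [hΩ.mem_nhds hz] with w hw
    rw [hu w, Real.log_mul_sq_div_sq four_ne_zero (norm_ne_zero_iff.2 (hF' w hw)) (by positivity)]
    rfl
  have hlog := hFz.deriv.harmonicAt_log_norm (hF' z hz)
  have hψ := hFz.contDiffAt_comp_norm_sq (contDiffAt_log_one_add (by positivity))
  have hg : ContDiffAt ℝ 2 g z := hlog.1.sub hψ
  have hΔg : Δ g z = -(4 * ‖deriv F z‖ ^ 2 / (1 + ‖F z‖ ^ 2) ^ 2) := by
    rw [hlog.1.laplacian_sub hψ, hlog.2.eq_of_nhds, hFz.laplacian_log_one_add_norm_sq,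
      Pi.zero_apply, zero_sub]
  have h2g : ContDiffAt ℝ 2 ((2 : ℝ) • g) z := hg.const_smul (2 : ℝ)
  have hC2 : ContDiffAt ℝ 2 u z := (contDiffAt_const.add h2g).congr_of_eventuallyEq hu_eq
  rw [← laplacian_eq_fderiv_fderiv_complexPlane hC2, (laplacian_congr_nhds hu_eq).eq_of_nhds,
    contDiffAt_const.laplacian_add h2g, laplacian_const, laplacian_smul _ hg, hΔg, hu z,
    Real.exp_log (by have := norm_pos_iff.2 (hF' z hz); positivity)]
  simp only [Pi.zero_apply, zero_add, smul_eq_mul]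
  ring
end

section
/- For λ > 0 and b > 0, the function u_b(x) = ln( 8b / ( λ (1 + b|x|²)² ) ) vanishes on the unit circle {x ∈ ℝ² : |x| = 1} if and only if 8b = λ(1+b)². Consequently, the number of b > 0 for which u_b solves the Dirichlet problem Δu + λ e^{u} = 0 on the open unit disk with u = 0 on the unit circle is: exactly two if 0 < λ < 2, exactly one if λ = 2, and zero if λ > 2. -/
/-!
Setting `f(x) = 1 + b‖x‖²`, the bubble `u_b = log(8b/λ) - 2 log f` has second derivative
`∂ᵥ∂ᵥ u_b = -4b (f‖v‖² - 2b⟪x, v⟫²) / f²`; summing over the standard basis of `ℝⁿ` gives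
`Δu_b = -4b (n f - 2b‖x‖²) / f²`, which for `n = 2` is `-8b / f² = -λ e^{u_b}`. So `u_b` solves
the equation on the whole plane, and the Dirichlet problem reduces to the boundary condition
`8b = λ(1 + b)²`, i.e. the quadratic `λb² + (2λ - 8)b + λ = 0`. Its discriminant is
`32(2 - λ)`, and since the product of its roots is `1` and their sum `(8 - 2λ)/λ` is positive for
`λ < 2`, it has two positive roots for `λ < 2`, the double root `1` for `λ = 2` and none for
`λ > 2`.
-/

open Real InnerProductSpace ContinuousLinearMap

noncomputable section

section Bubble

variable {E : Type*} [NormedAddCommGroup E]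

def gelfandBubble (lam b : ℝ) (x : E) : ℝ :=
  log (8 * b / (lam * (1 + b * ‖x‖ ^ 2) ^ 2))

variable {lam b : ℝ}

lemma gelfandBubble_eq (hlam : 0 < lam) (hb : 0 < b) (x : E) :
    gelfandBubble lam b x = log (8 * b) - log lam - 2 * log (1 + b * ‖x‖ ^ 2) := by
  have : 0 < 1 + b * ‖x‖ ^ 2 := by positivity
  rw [gelfandBubble, log_div (by positivity) (by positivity), log_mul hlam.ne' (by positivity),
    log_pow]
  push_cast
  ring

lemma gelfandBubble_of_norm_eq_one {x : E} (hx : ‖x‖ = 1) :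
    gelfandBubble lam b x = log (8 * b / (lam * (1 + b) ^ 2)) := by
  rw [gelfandBubble, hx, one_pow, mul_one]

lemma gelfandBubble_eq_zero_on_sphere_iff [NormedSpace ℝ E] [Nontrivial E]
    (hlam : 0 < lam) (hb : 0 < b) :
    (∀ x : E, ‖x‖ = 1 → gelfandBubble lam b x = 0) ↔ 8 * b = lam * (1 + b) ^ 2 := by
  have hpos : 0 < 8 * b / (lam * (1 + b) ^ 2) := by positivity
  have hval : log (8 * b / (lam * (1 + b) ^ 2)) = 0 ↔ 8 * b = lam * (1 + b) ^ 2 := by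
    rw [← log_one, log_injOn_pos.eq_iff hpos (Set.mem_Ioi.2 one_pos),
      div_eq_one_iff_eq (by positivity)]
  obtain ⟨x₀, hx₀⟩ := exists_norm_eq E zero_le_one
  constructor
  · intro h
    rw [← hval, ← gelfandBubble_of_norm_eq_one hx₀]
    exact h x₀ hx₀
  · intro h x hx
    rwa [gelfandBubble_of_norm_eq_one hx, hval]

variable [InnerProductSpace ℝ E]

lemma hasFDerivAt_one_add_mul_norm_sq (b : ℝ) (x : E) :
    HasFDerivAt (fun y : E => 1 + b * ‖y‖ ^ 2) ((2 * b) • innerSL ℝ x) x := by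
  refine (((hasStrictFDerivAt_norm_sq x).hasFDerivAt.const_mul b).const_add 1).congr_fderiv ?_
  ext v
  simp only [smul_apply, smul_eq_mul, nsmul_eq_mul]
  push_cast
  ring

lemma hasFDerivAt_gelfandBubble (hlam : 0 < lam) (hb : 0 < b) (x : E) :
    HasFDerivAt (gelfandBubble lam b) ((-(4 * b) / (1 + b * ‖x‖ ^ 2)) • innerSL ℝ x) x := by
  have hpos : 0 < 1 + b * ‖x‖ ^ 2 := by positivity
  have hlog := (hasFDerivAt_one_add_mul_norm_sq b x).log hpos.ne'
  rw [show gelfandBubble lam b = fun y : E => log (8 * b) - log lam - 2 * log (1 + b * ‖y‖ ^ 2)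
    from funext (gelfandBubble_eq hlam hb)]
  refine ((hasFDerivAt_const _ x).sub (hlog.const_mul 2)).congr_fderiv ?_
  ext v
  simp only [sub_apply, smul_apply, smul_eq_mul, zero_apply]
  field_simp
  ring

lemma fderiv_gelfandBubble_apply (hlam : 0 < lam) (hb : 0 < b) (x v : E) :
    fderiv ℝ (gelfandBubble lam b) x v = -(4 * b) * ⟪x, v⟫_ℝ / (1 + b * ‖x‖ ^ 2) := by
  rw [(hasFDerivAt_gelfandBubble hlam hb x).fderiv]
  simp only [smul_apply, innerSL_apply_apply, smul_eq_mul]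
  ring

lemma fderiv_fderiv_gelfandBubble_apply (hlam : 0 < lam) (hb : 0 < b) (x v : E) :
    fderiv ℝ (fun y => fderiv ℝ (gelfandBubble lam b) y v) x v
      = -(4 * b) * ((1 + b * ‖x‖ ^ 2) * ‖v‖ ^ 2 - 2 * b * ⟪x, v⟫_ℝ ^ 2)
          / (1 + b * ‖x‖ ^ 2) ^ 2 := by
  have hpos : 0 < 1 + b * ‖x‖ ^ 2 := by positivity
  have hinv : HasFDerivAt (fun y : E => (1 + b * ‖y‖ ^ 2)⁻¹)
      (-((1 + b * ‖x‖ ^ 2) ^ 2)⁻¹ • (2 * b) • innerSL ℝ x) x :=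
    (hasDerivAt_inv hpos.ne').comp_hasFDerivAt x (hasFDerivAt_one_add_mul_norm_sq b x)
  have hprod : HasFDerivAt (fun y : E => -(4 * b) * ((1 + b * ‖y‖ ^ 2)⁻¹ * ⟪v, y⟫_ℝ)) _ x :=
    (hinv.mul (innerSL ℝ v).hasFDerivAt).const_mul (-(4 * b))
  rw [show (fun y => fderiv ℝ (gelfandBubble lam b) y v)
      = fun y => -(4 * b) * ((1 + b * ‖y‖ ^ 2)⁻¹ * ⟪v, y⟫_ℝ) from
    funext fun y => by rw [fderiv_gelfandBubble_apply hlam hb, real_inner_comm]; ring, hprod.fderiv]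
  simp only [smul_apply, add_apply, smul_eq_mul, innerSL_apply_apply, real_inner_self_eq_norm_sq]
  field_simp
  rw [real_inner_comm]
  ring

end Bubble

lemma sum_fderiv_fderiv_gelfandBubble {n : ℕ} {lam b : ℝ} (hlam : 0 < lam) (hb : 0 < b)
    (x : EuclideanSpace ℝ (Fin n)) :
    ∑ i, fderiv ℝ (fun y => fderiv ℝ (gelfandBubble lam b) y (EuclideanSpace.single i 1)) x
        (EuclideanSpace.single i 1)
      = -(4 * b) * (n * (1 + b * ‖x‖ ^ 2) - 2 * b * ‖x‖ ^ 2) / (1 + b * ‖x‖ ^ 2) ^ 2 := by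
  simp only [fderiv_fderiv_gelfandBubble_apply hlam hb, PiLp.norm_single, norm_one,
    EuclideanSpace.inner_single_right, one_mul, conj_trivial, ← Finset.sum_div,
    ← Finset.mul_sum, Finset.sum_sub_distrib, ← EuclideanSpace.real_norm_sq_eq, one_pow,
    Finset.sum_const, Finset.card_univ, Fintype.card_fin, nsmul_eq_mul]
  ring

lemma gelfandBubble_laplacian_add_mul_exp {lam b : ℝ} (hlam : 0 < lam) (hb : 0 < b)
    (x : EuclideanSpace ℝ (Fin 2)) :
    ∑ i, fderiv ℝ (fun y => fderiv ℝ (gelfandBubble lam b) y (EuclideanSpace.single i 1)) x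
        (EuclideanSpace.single i 1) + lam * exp (gelfandBubble lam b x) = 0 := by
  have hpos : 0 < 1 + b * ‖x‖ ^ 2 := by positivity
  rw [sum_fderiv_fderiv_gelfandBubble hlam hb, gelfandBubble, exp_log (by positivity)]
  field_simp
  push_cast
  ring

lemma eight_mul_eq_iff_quadratic (lam b : ℝ) :
    8 * b = lam * (1 + b) ^ 2 ↔ lam * (b * b) + (2 * lam - 8) * b + lam = 0 := by
  constructor <;> intro h <;> linear_combination -h

lemma encard_setOf_eight_mul_eq_of_lt_two {lam : ℝ} (hlam : 0 < lam) (h2 : lam < 2) :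
    {b : ℝ | 0 < b ∧ 8 * b = lam * (1 + b) ^ 2}.encard = 2 := by
  set s := √(32 * (2 - lam))
  have hs_sq : s * s = 32 * (2 - lam) := mul_self_sqrt (by linarith)
  have hs_pos : 0 < s := sqrt_pos.2 (by linarith)
  have hdiscrim : discrim lam (2 * lam - 8) lam = s * s := by rw [discrim, hs_sq]; ring
  -- `(8 - 2λ)² - s² = 4λ²`, so both roots are positive
  have hs_lt : s < 8 - 2 * lam := by nlinarith
  have hroots : {b : ℝ | 0 < b ∧ 8 * b = lam * (1 + b) ^ 2}
      = {(8 - 2 * lam + s) / (2 * lam), (8 - 2 * lam - s) / (2 * lam)} := by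
    ext b
    simp only [Set.mem_ofPred_eq, Set.mem_insert_iff, Set.mem_singleton_iff,
      eight_mul_eq_iff_quadratic, quadratic_eq_zero_iff hlam.ne' hdiscrim, neg_sub]
    constructor
    · exact fun h => h.2
    · rintro (rfl | rfl) <;> refine ⟨div_pos (by linarith) (by positivity), by simp⟩
  have hne : (8 - 2 * lam + s) / (2 * lam) ≠ (8 - 2 * lam - s) / (2 * lam) := by
    rw [Ne, div_left_inj' (by positivity)]
    linarith
  rw [hroots, Set.encard_pair hne]

lemma setOf_eight_mul_eq_two_mul : {b : ℝ | 0 < b ∧ 8 * b = 2 * (1 + b) ^ 2} = {1} := by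
  ext b
  simp only [Set.mem_ofPred_eq, Set.mem_singleton_iff]
  constructor
  · rintro ⟨-, h⟩
    nlinarith [sq_nonneg (b - 1)]
  · rintro rfl
    norm_num

lemma setOf_eight_mul_eq_of_two_lt {lam : ℝ} (h2 : 2 < lam) :
    {b : ℝ | 0 < b ∧ 8 * b = lam * (1 + b) ^ 2} = ∅ := by
  refine Set.eq_empty_of_forall_notMem fun b ⟨hb, h⟩ => ?_
  nlinarith [sq_nonneg (b - 1), sq_nonneg (1 + b)]

end

/-- The Gelfand problem on the unit disk: for `λ, b > 0`, the radial function
`u_b(x) = ln( 8b / (λ (1+b|x|²)²) )` vanishes on the unit circle iff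
`8b = λ(1+b)²`; consequently the number of `b > 0` for which `u_b` solves the
Dirichlet problem `Δu + λ e^u = 0` in the open unit disk, `u = 0` on the unit
circle, is two for `0 < λ < 2`, one for `λ = 2` and zero for `λ > 2`.
The Laplacian is the sum of second directional derivatives along the coordinate
directions of `ℝ² = EuclideanSpace ℝ (Fin 2)`. -/
theorem gelfand_dirichlet_unit_disk
    (lam : ℝ) (hlam : 0 < lam)
    (u : ℝ → EuclideanSpace ℝ (Fin 2) → ℝ)
    (hu : ∀ b x, u b x = Real.log (8 * b / (lam * (1 + b * ‖x‖ ^ 2) ^ 2)))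
    (S : Set ℝ)
    (hS : S = {b : ℝ | 0 < b ∧
      (∀ x : EuclideanSpace ℝ (Fin 2), ‖x‖ < 1 →
        (∑ i : Fin 2,
          fderiv ℝ (fun y => fderiv ℝ (u b) y (EuclideanSpace.single i 1)) x
            (EuclideanSpace.single i 1))
          + lam * Real.exp (u b x) = 0) ∧
      (∀ x : EuclideanSpace ℝ (Fin 2), ‖x‖ = 1 → u b x = 0)}) :
    (∀ b : ℝ, 0 < b →
      ((∀ x : EuclideanSpace ℝ (Fin 2), ‖x‖ = 1 → u b x = 0) ↔
        8 * b = lam * (1 + b) ^ 2)) ∧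
    (lam < 2 → S.encard = 2) ∧
    (lam = 2 → S.encard = 1) ∧
    (2 < lam → S.encard = 0) := by
  obtain rfl : u = fun b => gelfandBubble lam b := funext fun b => funext (hu b)
  have hboundary b (hb : 0 < b) := gelfandBubble_eq_zero_on_sphere_iff
    (E := EuclideanSpace ℝ (Fin 2)) hlam hb
  have hS' : S = {b : ℝ | 0 < b ∧ 8 * b = lam * (1 + b) ^ 2} := by
    rw [hS]
    ext b
    simp only [Set.mem_ofPred_eq]
    refine and_congr_right fun hb => ?_
    rw [hboundary b hb, and_iff_right_iff_imp]
    exact fun _ x _ => gelfandBubble_laplacian_add_mul_exp hlam hb x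
  refine ⟨hboundary, fun h2 => ?_, fun h2 => ?_, fun h2 => ?_⟩
  · rw [hS', encard_setOf_eight_mul_eq_of_lt_two hlam h2]
  · rw [hS', h2, setOf_eight_mul_eq_two_mul, Set.encard_singleton]
  · rw [hS', setOf_eight_mul_eq_of_two_lt h2, Set.encard_empty]
end

section
/- Let I and J be open intervals in ℝ, and let f : I → ℝ and g : J → ℝ be twice continuously differentiable functions such that f'(x)·g'(y) < 0 and f(x) + g(y) ≠ 0 for all (x,y) ∈ I × J. Then the function u(x,y) = ln( −2 f'(x) g'(y) / (f(x) + g(y))² ) satisfies ∂²u/∂x∂y = −e^{u} at every point of I × J. -/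
/-! On `I × J` the logarithm splits as
`u = log (-2 f'(x)) + log g'(y) - 2 log (f(x) + g(y))`. The first two terms each depend on one
variable only, so they vanish under `∂²/∂x∂y`, while `∂²/∂x∂y log (f(x) + g(y)) = -f'g'/(f + g)²`.
Hence `u_xy = 2 f'g'/(f + g)² = -e^u`. -/

open Filter Topology Real

lemma Real.log_mul_div_sq {a b c : ℝ} (ha : a ≠ 0) (hb : b ≠ 0) (hc : c ≠ 0) :
    log (a * b / c ^ 2) = log a + (log b - 2 * log c) := by
  rw [log_div (mul_ne_zero ha hb) (pow_ne_zero 2 hc), log_mul ha hb, log_pow]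
  push_cast
  ring

lemma deriv_deriv_congr {F G : ℝ → ℝ → ℝ} {x y : ℝ}
    (h : ∀ᶠ x' in 𝓝 x, ∀ᶠ y' in 𝓝 y, F x' y' = G x' y') :
    deriv (fun x' => deriv (F x') y) x = deriv (fun x' => deriv (G x') y) x :=
  EventuallyEq.deriv_eq (h.mono fun _ hx' => EventuallyEq.deriv_eq hx')

lemma deriv_deriv_add_sub_mul_log_add {a b f g : ℝ → ℝ} {x y : ℝ} (c : ℝ)
    (hb : DifferentiableAt ℝ b y) (hf : DifferentiableAt ℝ f x) (hg : DifferentiableAt ℝ g y)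
    (hfg : f x + g y ≠ 0) :
    deriv (fun x' => deriv (fun y' => a x' + (b y' - c * log (f x' + g y'))) y) x
      = c * (deriv f x * deriv g y) / (f x + g y) ^ 2 := by
  have hinner : (fun x' => deriv (fun y' => a x' + (b y' - c * log (f x' + g y'))) y)
      =ᶠ[𝓝 x] fun x' => deriv b y - c * deriv g y * (f x' + g y)⁻¹ := by
    filter_upwards [(hf.continuousAt.add continuousAt_const).eventually_ne hfg] with x' hx'
    have hlog := (hg.hasDerivAt.const_add (f x')).log hx'
    have h : HasDerivAt (fun y' => a x' + (b y' - c * log (f x' + g y')))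
        (deriv b y - c * (deriv g y / (f x' + g y))) y :=
      (hb.hasDerivAt.sub (hlog.const_mul c)).const_add (a x')
    rw [h.deriv]
    ring
  have houter : HasDerivAt (fun x' => deriv b y - c * deriv g y * (f x' + g y)⁻¹)
      (-(c * deriv g y * (-deriv f x / (f x + g y) ^ 2))) x :=
    (((hf.hasDerivAt.add_const (g y)).inv hfg).const_mul (c * deriv g y)).const_sub (deriv b y)
  rw [hinner.deriv_eq, houter.deriv]
  ring

theorem liouville_hyperbolic_solution_neg_general
    (I J : Set ℝ) (hI : IsOpen I) (hJ : IsOpen J)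
    (f g : ℝ → ℝ)
    (hf : ContDiffOn ℝ 2 f I) (hg : ContDiffOn ℝ 2 g J)
    (hneg : ∀ x ∈ I, ∀ y ∈ J, deriv f x * deriv g y < 0)
    (hne : ∀ x ∈ I, ∀ y ∈ J, f x + g y ≠ 0)
    (u : ℝ → ℝ → ℝ)
    (hu : ∀ x y, u x y =
      Real.log (-2 * deriv f x * deriv g y / (f x + g y) ^ 2)) :
    ∀ x ∈ I, ∀ y ∈ J,
      deriv (fun x' => deriv (fun y' => u x' y') y) x = -Real.exp (u x y) := by
  intro x hx y hy
  have hu_split : ∀ᶠ x' in 𝓝 x, ∀ᶠ y' in 𝓝 y, u x' y' =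
      log (-2 * deriv f x') + (log (deriv g y') - 2 * log (f x' + g y')) := by
    filter_upwards [hI.mem_nhds hx] with x' hx'
    filter_upwards [hJ.mem_nhds hy] with y' hy'
    obtain ⟨hf', hg'⟩ := mul_ne_zero_iff.mp (hneg x' hx' y' hy').ne
    rw [hu, Real.log_mul_div_sq (by simpa using hf') hg' (hne x' hx' y' hy')]
  have hfx : DifferentiableAt ℝ f x :=
    (hf.contDiffAt (hI.mem_nhds hx)).differentiableAt two_ne_zero
  have hgy : DifferentiableAt ℝ g y :=
    (hg.contDiffAt (hJ.mem_nhds hy)).differentiableAt two_ne_zero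
  have hg'y : DifferentiableAt ℝ (deriv g) y :=
    ((hg.deriv_of_isOpen hJ (by norm_num : (1 : WithTop ℕ∞) + 1 ≤ 2)).contDiffAt
      (hJ.mem_nhds hy)).differentiableAt one_ne_zero
  have hpos : 0 < -2 * deriv f x * deriv g y / (f x + g y) ^ 2 :=
    div_pos (by linarith [hneg x hx y hy]) (sq_pos_of_ne_zero (hne x hx y hy))
  rw [deriv_deriv_congr hu_split, deriv_deriv_add_sub_mul_log_add 2
    (hg'y.log (mul_ne_zero_iff.mp (hneg x hx y hy).ne).2) hfx hgy (hne x hx y hy),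
    hu, Real.exp_log hpos]
  ring

/-- Liouville's formula with the opposite sign: if `f'(x)·g'(y) < 0` and
`f(x)+g(y) ≠ 0` on a product of open intervals, then
`u(x,y) = ln( -2 f'(x) g'(y) / (f(x)+g(y))² )` satisfies `u_{xy} = -e^u`. -/
theorem liouville_hyperbolic_solution_neg
    (I J : Set ℝ) (hI : IsOpen I) (hJ : IsOpen J)
    (hIint : I.OrdConnected) (hJint : J.OrdConnected)
    (f g : ℝ → ℝ)
    (hf : ContDiffOn ℝ 2 f I) (hg : ContDiffOn ℝ 2 g J)
    (hneg : ∀ x ∈ I, ∀ y ∈ J, deriv f x * deriv g y < 0)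
    (hne : ∀ x ∈ I, ∀ y ∈ J, f x + g y ≠ 0)
    (u : ℝ → ℝ → ℝ)
    (hu : ∀ x y, u x y =
      Real.log (-2 * deriv f x * deriv g y / (f x + g y) ^ 2)) :
    ∀ x ∈ I, ∀ y ∈ J,
      deriv (fun x' => deriv (fun y' => u x' y') y) x = -Real.exp (u x y) :=
  liouville_hyperbolic_solution_neg_general I J hI hJ f g hf hg hneg hne u hu
end
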